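/- arXiv:1904.02410 — 3 statements merged into one kernel-verified Lean document; each statement's English description precedes it below -/
import Mathlib

section
/- Let Ω ⊆ ℝ² be an open set and let n : Ω → ℝ³ be twice continuously differentiable with |n(x)| = 1 for all x ∈ Ω, and define Q : Ω → S₀ by Q(x) = √(3/2)(n(x)⊗n(x) − (1/3)I). If n is conformal, then Q satisfies the S⁴-valued harmonic map equation: ΔQ(x) = −(|∂₁Q(x)|² + |∂₂Q(x)|²) Q(x) for all x ∈ Ω, where |·| is the Frobenius norm on matrices. -/
/-
Write `u = ∂₁n` and `v = ∂₂n = σ n × u`. Since `|n| = 1`, the vectors `n, u, v` are pairwise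
orthogonal with `|u| = |v|`, so `u ⊗ u + v ⊗ v = |u|² (I - n ⊗ n)`. Differentiating `v = σ n × u`
and using the symmetry of second derivatives gives `Δn = -2 |u|² n`. With
`ΔQ = √(3/2) (Δn ⊗ n + n ⊗ Δn + 2 (u ⊗ u + v ⊗ v))` and `|∂ₖQ|² = 3 |∂ₖn|²`, both sides of the
equation become `-6 |u|² Q`.
-/

open Matrix

/-- First partial derivative of a map `ℝ² → ℝ³` along the first coordinate direction. -/
noncomputable def pd1 (f : ℝ × ℝ → (Fin 3 → ℝ)) (x : ℝ × ℝ) : Fin 3 → ℝ :=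
  fderiv ℝ f x (1, 0)

/-- Second partial derivative of a map `ℝ² → ℝ³` along the second coordinate direction. -/
noncomputable def pd2 (f : ℝ × ℝ → (Fin 3 → ℝ)) (x : ℝ × ℝ) : Fin 3 → ℝ :=
  fderiv ℝ f x (0, 1)

/-- Componentwise first partial derivative of a matrix-valued map on `ℝ²`. -/
noncomputable def pdM1 (f : ℝ × ℝ → Matrix (Fin 3) (Fin 3) ℝ) (x : ℝ × ℝ) :
    Matrix (Fin 3) (Fin 3) ℝ :=
  Matrix.of fun i j => fderiv ℝ (fun y => f y i j) x (1, 0)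

/-- Componentwise second partial derivative of a matrix-valued map on `ℝ²`. -/
noncomputable def pdM2 (f : ℝ × ℝ → Matrix (Fin 3) (Fin 3) ℝ) (x : ℝ × ℝ) :
    Matrix (Fin 3) (Fin 3) ℝ :=
  Matrix.of fun i j => fderiv ℝ (fun y => f y i j) x (0, 1)

/-- Squared Frobenius norm of a 3×3 real matrix: `|A|² = tr(Aᵀ A)`. -/
noncomputable def frobSq (A : Matrix (Fin 3) (Fin 3) ℝ) : ℝ := (Aᵀ * A).trace

/-- The `Q`-tensor field `Q = √(3/2) (n ⊗ n - (1/3) I)` associated with a director field `n`. -/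
noncomputable def Qtensor (n : ℝ × ℝ → (Fin 3 → ℝ)) (x : ℝ × ℝ) : Matrix (Fin 3) (Fin 3) ℝ :=
  Real.sqrt (3 / 2) • (vecMulVec (n x) (n x) - (3 : ℝ)⁻¹ • (1 : Matrix (Fin 3) (Fin 3) ℝ))

open Filter Topology

-- Any norm on matrices would do: it only serves to differentiate matrix-valued maps as a whole.
attribute [local instance] Matrix.normedAddCommGroup Matrix.normedSpace

section Calculus

variable {E : Type*} [NormedAddCommGroup E] [NormedSpace ℝ E] {x : E}

section Bilinear

variable {M N P : Type*} [NormedAddCommGroup M] [NormedSpace ℝ M] [FiniteDimensional ℝ M]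
  [NormedAddCommGroup N] [NormedSpace ℝ N] [FiniteDimensional ℝ N]
  [NormedAddCommGroup P] [NormedSpace ℝ P]
  (B : M →ₗ[ℝ] N →ₗ[ℝ] P) {a : E → M} {b : E → N}

theorem LinearMap.differentiableAt_of_bilinear (ha : DifferentiableAt ℝ a x)
    (hb : DifferentiableAt ℝ b x) : DifferentiableAt ℝ (fun y => B (a y) (b y)) x :=
  (B.toContinuousBilinearMap.hasFDerivAt_of_bilinear ha.hasFDerivAt
    hb.hasFDerivAt).differentiableAt

theorem LinearMap.fderiv_of_bilinear_apply (ha : DifferentiableAt ℝ a x)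
    (hb : DifferentiableAt ℝ b x) (v : E) :
    fderiv ℝ (fun y => B (a y) (b y)) x v =
      B (fderiv ℝ a x v) (b x) + B (a x) (fderiv ℝ b x v) := by
  simpa [add_comm] using congrArg (· v) (B.toContinuousBilinearMap.fderiv_of_bilinear ha hb)

end Bilinear

variable {m n : Type*}

-- `pdM1 F` and `pdM2 F` are `matrixDirDeriv F (1, 0)` and `matrixDirDeriv F (0, 1)` by definition.
noncomputable def matrixDirDeriv (F : E → Matrix m n ℝ) (v x : E) : Matrix m n ℝ :=
  Matrix.of fun i j => fderiv ℝ (fun y => F y i j) x v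

theorem matrixDirDeriv_eq_fderiv [Fintype m] [Fintype n] {F : E → Matrix m n ℝ}
    (hF : DifferentiableAt ℝ F x) (v : E) :
    matrixDirDeriv F v x = fderiv ℝ F x v := by
  ext i j
  let entry : Matrix m n ℝ →L[ℝ] ℝ :=
    (ContinuousLinearMap.proj j).comp
      (ContinuousLinearMap.proj (R := ℝ) (φ := fun _ : m => n → ℝ) i)
  exact congrArg (· v) (entry.hasFDerivAt.comp x hF.hasFDerivAt).fderiv

theorem matrixDirDeriv_congr {F G : E → Matrix m n ℝ} (h : F =ᶠ[𝓝 x] G) (v : E) :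
    matrixDirDeriv F v x = matrixDirDeriv G v x := by
  ext i j
  exact congrArg (· v) (EventuallyEq.fderiv_eq (𝕜 := ℝ) (h.mono fun y hy => congrFun₂ hy i j))

variable {F : Type*} [NormedAddCommGroup F] [NormedSpace ℝ F] {f : E → F}

theorem ContDiffAt.differentiableAt_fderiv_apply (hf : ContDiffAt ℝ 2 f x) (v : E) :
    DifferentiableAt ℝ (fun y => fderiv ℝ f y v) x :=
  ((hf.fderiv_right (m := 1) (by norm_num)).differentiableAt one_ne_zero).clm_apply
    (differentiableAt_const v)

theorem ContDiffAt.fderiv_fderiv_apply_comm (hf : ContDiffAt ℝ 2 f x) (v w : E) :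
    fderiv ℝ (fun y => fderiv ℝ f y v) x w = fderiv ℝ (fun y => fderiv ℝ f y w) x v := by
  have hd := (hf.fderiv_right (m := 1) (by norm_num)).differentiableAt one_ne_zero
  rw [fderiv_clm_apply hd (differentiableAt_const v),
    fderiv_clm_apply hd (differentiableAt_const w)]
  simpa using hf.isSymmSndFDerivAt (by simp) w v

theorem ContDiffAt.eventually_differentiableAt (hf : ContDiffAt ℝ 2 f x) :
    ∀ᶠ y in 𝓝 x, DifferentiableAt ℝ f y :=
  (hf.eventually (by simp)).mono fun _ hy => hy.differentiableAt two_ne_zero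

section Products

variable [Fintype m] [Fintype n]

theorem DifferentiableAt.vecMulVec {a : E → m → ℝ} {b : E → n → ℝ}
    (ha : DifferentiableAt ℝ a x) (hb : DifferentiableAt ℝ b x) :
    DifferentiableAt ℝ (fun y => vecMulVec (a y) (b y)) x :=
  (vecMulVecBilin ℝ ℝ).differentiableAt_of_bilinear ha hb

theorem fderiv_vecMulVec_apply {a : E → m → ℝ} {b : E → n → ℝ}
    (ha : DifferentiableAt ℝ a x) (hb : DifferentiableAt ℝ b x) (v : E) :
    fderiv ℝ (fun y => vecMulVec (a y) (b y)) x v =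
      vecMulVec (fderiv ℝ a x v) (b x) + vecMulVec (a x) (fderiv ℝ b x v) :=
  (vecMulVecBilin ℝ ℝ).fderiv_of_bilinear_apply ha hb v

theorem fderiv_dotProduct_apply {a b : E → m → ℝ}
    (ha : DifferentiableAt ℝ a x) (hb : DifferentiableAt ℝ b x) (v : E) :
    fderiv ℝ (fun y => a y ⬝ᵥ b y) x v = fderiv ℝ a x v ⬝ᵥ b x + a x ⬝ᵥ fderiv ℝ b x v :=
  (dotProductBilin ℝ ℝ).fderiv_of_bilinear_apply ha hb v

theorem DifferentiableAt.cross {a b : E → Fin 3 → ℝ}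
    (ha : DifferentiableAt ℝ a x) (hb : DifferentiableAt ℝ b x) :
    DifferentiableAt ℝ (fun y => a y ⨯₃ b y) x :=
  crossProduct.differentiableAt_of_bilinear ha hb

theorem fderiv_cross_apply {a b : E → Fin 3 → ℝ}
    (ha : DifferentiableAt ℝ a x) (hb : DifferentiableAt ℝ b x) (v : E) :
    fderiv ℝ (fun y => a y ⨯₃ b y) x v = fderiv ℝ a x v ⨯₃ b x + a x ⨯₃ fderiv ℝ b x v :=
  crossProduct.fderiv_of_bilinear_apply ha hb v

theorem fderiv_dotProduct_add_dotProduct_fderiv_eq_zero {a b : E → m → ℝ} {c : ℝ}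
    (h : ∀ᶠ y in 𝓝 x, a y ⬝ᵥ b y = c) (ha : DifferentiableAt ℝ a x)
    (hb : DifferentiableAt ℝ b x) (v : E) :
    fderiv ℝ a x v ⬝ᵥ b x + a x ⬝ᵥ fderiv ℝ b x v = 0 := by
  have hconst : fderiv ℝ (fun y => a y ⬝ᵥ b y) x = 0 :=
    (EventuallyEq.fderiv_eq (𝕜 := ℝ) h).trans (fderiv_const_apply c)
  simpa [hconst] using (fderiv_dotProduct_apply ha hb v).symm

theorem dotProduct_fderiv_eq_zero_of_unit {a : E → m → ℝ}
    (h : ∀ᶠ y in 𝓝 x, a y ⬝ᵥ a y = 1) (ha : DifferentiableAt ℝ a x) (v : E) :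
    a x ⬝ᵥ fderiv ℝ a x v = 0 := by
  have := fderiv_dotProduct_add_dotProduct_fderiv_eq_zero h ha ha v
  rw [dotProduct_comm] at this
  linarith

end Products

end Calculus

section VectorAlgebra

variable {σ : ℝ} {n u : Fin 3 → ℝ}

theorem vecMulVec_cross_cross (a b : Fin 3 → ℝ) :
    vecMulVec (a ⨯₃ b) (a ⨯₃ b) = ((a ⬝ᵥ a) * (b ⬝ᵥ b) - (a ⬝ᵥ b) ^ 2) • 1
      - (a ⬝ᵥ a) • vecMulVec b b - (b ⬝ᵥ b) • vecMulVec a a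
      + (a ⬝ᵥ b) • (vecMulVec a b + vecMulVec b a) := by
  ext i j
  fin_cases i <;> fin_cases j <;>
    simp [cross_apply, vec3_dotProduct, vecMulVec_apply, one_apply] <;> ring

theorem smul_cross_dotProduct_self (hσ : σ * σ = 1) (hn : n ⬝ᵥ n = 1) (hnu : n ⬝ᵥ u = 0) :
    (σ • n ⨯₃ u) ⬝ᵥ (σ • n ⨯₃ u) = u ⬝ᵥ u := by
  rw [smul_dotProduct, dotProduct_smul, cross_dot_cross, hn, hnu, smul_eq_mul, smul_eq_mul]
  linear_combination (u ⬝ᵥ u) * hσ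

theorem vecMulVec_add_vecMulVec_smul_cross (hσ : σ * σ = 1) (hn : n ⬝ᵥ n = 1)
    (hnu : n ⬝ᵥ u = 0) :
    vecMulVec u u + vecMulVec (σ • n ⨯₃ u) (σ • n ⨯₃ u) = (u ⬝ᵥ u) • (1 - vecMulVec n n) := by
  rw [smul_vecMulVec, vecMulVec_smul, smul_smul, hσ, one_smul, vecMulVec_cross_cross, hn, hnu]
  module

end VectorAlgebra

theorem frobSq_smul (c : ℝ) (A : Matrix (Fin 3) (Fin 3) ℝ) :
    frobSq (c • A) = c ^ 2 * frobSq A := by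
  simp only [frobSq, transpose_smul, smul_mul, Matrix.mul_smul, trace_smul, smul_eq_mul]
  ring

theorem frobSq_vecMulVec_add_vecMulVec (a b : Fin 3 → ℝ) :
    frobSq (vecMulVec a b + vecMulVec b a) = 2 * ((a ⬝ᵥ a) * (b ⬝ᵥ b) + (a ⬝ᵥ b) ^ 2) := by
  simp only [frobSq, trace, diag, mul_apply, transpose_apply, Matrix.add_apply, vecMulVec_apply,
    Fin.sum_univ_three, vec3_dotProduct]
  ring

section Qtensor

variable {n : ℝ × ℝ → Fin 3 → ℝ} {x : ℝ × ℝ}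

theorem differentiableAt_Qtensor (hn : DifferentiableAt ℝ n x) :
    DifferentiableAt ℝ (Qtensor n) x :=
  ((hn.vecMulVec hn).sub_const _).fun_const_smul _

theorem fderiv_Qtensor_apply (hn : DifferentiableAt ℝ n x) (v : ℝ × ℝ) :
    fderiv ℝ (Qtensor n) x v =
      √(3 / 2) • (vecMulVec (fderiv ℝ n x v) (n x) + vecMulVec (n x) (fderiv ℝ n x v)) := by
  have h : HasFDerivAt (Qtensor n) (√(3 / 2) • fderiv ℝ (fun y => vecMulVec (n y) (n y)) x) x :=
    ((hn.vecMulVec hn).hasFDerivAt.sub_const _).fun_const_smul _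
  rw [h.fderiv, _root_.smul_apply, fderiv_vecMulVec_apply hn hn]

theorem matrixDirDeriv_Qtensor (hn : DifferentiableAt ℝ n x) (v : ℝ × ℝ) :
    matrixDirDeriv (Qtensor n) v x =
      √(3 / 2) • (vecMulVec (fderiv ℝ n x v) (n x) + vecMulVec (n x) (fderiv ℝ n x v)) :=
  (matrixDirDeriv_eq_fderiv (differentiableAt_Qtensor hn) v).trans (fderiv_Qtensor_apply hn v)

theorem matrixDirDeriv_matrixDirDeriv_Qtensor (hn : ContDiffAt ℝ 2 n x) (v : ℝ × ℝ) :
    matrixDirDeriv (matrixDirDeriv (Qtensor n) v) v x =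
      √(3 / 2) • (vecMulVec (fderiv ℝ (fun y => fderiv ℝ n y v) x v) (n x)
        + 2 • vecMulVec (fderiv ℝ n x v) (fderiv ℝ n x v)
        + vecMulVec (n x) (fderiv ℝ (fun y => fderiv ℝ n y v) x v)) := by
  have hd := hn.differentiableAt two_ne_zero
  have hd' := hn.differentiableAt_fderiv_apply v
  have hG : HasFDerivAt
      (fun y => √(3 / 2) • (vecMulVec (fderiv ℝ n y v) (n y) + vecMulVec (n y) (fderiv ℝ n y v)))
      (√(3 / 2) • (fderiv ℝ (fun y => vecMulVec (fderiv ℝ n y v) (n y)) x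
        + fderiv ℝ (fun y => vecMulVec (n y) (fderiv ℝ n y v)) x)) x :=
    ((hd'.vecMulVec hd).hasFDerivAt.fun_add (hd.vecMulVec hd').hasFDerivAt).fun_const_smul _
  rw [matrixDirDeriv_congr (hn.eventually_differentiableAt.mono fun y hy =>
      matrixDirDeriv_Qtensor hy v), matrixDirDeriv_eq_fderiv hG.differentiableAt, hG.fderiv,
    _root_.smul_apply, _root_.add_apply, fderiv_vecMulVec_apply hd' hd,
    fderiv_vecMulVec_apply hd hd']
  module

theorem frobSq_matrixDirDeriv_Qtensor (hn : DifferentiableAt ℝ n x) (hnn : n x ⬝ᵥ n x = 1)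
    {v : ℝ × ℝ} (hnv : n x ⬝ᵥ fderiv ℝ n x v = 0) :
    frobSq (matrixDirDeriv (Qtensor n) v x) = 3 * (fderiv ℝ n x v ⬝ᵥ fderiv ℝ n x v) := by
  rw [matrixDirDeriv_Qtensor hn, frobSq_smul, frobSq_vecMulVec_add_vecMulVec, hnn,
    dotProduct_comm _ (n x), hnv, Real.sq_sqrt (by norm_num)]
  ring

theorem laplacian_Qtensor (hn : ContDiffAt ℝ 2 n x) :
    pdM1 (pdM1 (Qtensor n)) x + pdM2 (pdM2 (Qtensor n)) x =
      √(3 / 2) • (vecMulVec (pd1 (pd1 n) x + pd2 (pd2 n) x) (n x)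
        + vecMulVec (n x) (pd1 (pd1 n) x + pd2 (pd2 n) x)
        + 2 • (vecMulVec (pd1 n x) (pd1 n x) + vecMulVec (pd2 n x) (pd2 n x))) := by
  have h1 : pdM1 (pdM1 (Qtensor n)) x = √(3 / 2) • (vecMulVec (pd1 (pd1 n) x) (n x)
      + 2 • vecMulVec (pd1 n x) (pd1 n x) + vecMulVec (n x) (pd1 (pd1 n) x)) :=
    matrixDirDeriv_matrixDirDeriv_Qtensor hn _
  have h2 : pdM2 (pdM2 (Qtensor n)) x = √(3 / 2) • (vecMulVec (pd2 (pd2 n) x) (n x)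
      + 2 • vecMulVec (pd2 n x) (pd2 n x) + vecMulVec (n x) (pd2 (pd2 n) x)) :=
    matrixDirDeriv_matrixDirDeriv_Qtensor hn _
  rw [h1, h2, add_vecMulVec, vecMulVec_add]
  module

theorem laplacian_eq_of_conformal {σ : ℝ} (hn : ContDiffAt ℝ 2 n x)
    (hunit : ∀ᶠ y in 𝓝 x, n y ⬝ᵥ n y = 1) (hσ : σ * σ = 1)
    (hconf : ∀ᶠ y in 𝓝 x, pd2 n y = σ • (n y ⨯₃ pd1 n y)) :
    pd1 (pd1 n) x + pd2 (pd2 n) x = -(2 * (pd1 n x ⬝ᵥ pd1 n x)) • n x := by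
  have hd := hn.differentiableAt two_ne_zero
  have hd1 : DifferentiableAt ℝ (pd1 n) x := hn.differentiableAt_fderiv_apply _
  have hnu : n x ⬝ᵥ pd1 n x = 0 := dotProduct_fderiv_eq_zero_of_unit hunit hd _
  have hnw : n x ⬝ᵥ pd1 (pd1 n) x = -(pd1 n x ⬝ᵥ pd1 n x) := by
    have h : ∀ᶠ y in 𝓝 x, n y ⬝ᵥ pd1 n y = 0 :=
      (hunit.eventually_nhds.and hn.eventually_differentiableAt).mono fun _ hy =>
        dotProduct_fderiv_eq_zero_of_unit hy.1 hy.2 _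
    have h' : pd1 n x ⬝ᵥ pd1 n x + n x ⬝ᵥ pd1 (pd1 n) x = 0 :=
      fderiv_dotProduct_add_dotProduct_fderiv_eq_zero h hd hd1 (1, 0)
    linarith
  have hderiv : ∀ e, fderiv ℝ (pd2 n) x e =
      σ • (fderiv ℝ n x e ⨯₃ pd1 n x + n x ⨯₃ fderiv ℝ (pd1 n) x e) := fun e => by
    rw [EventuallyEq.fderiv_eq hconf, fderiv_fun_const_smul (hd.cross hd1), _root_.smul_apply,
      fderiv_cross_apply hd hd1]
  have h12 : pd1 (pd2 n) x = σ • (pd1 n x ⨯₃ pd1 n x + n x ⨯₃ pd1 (pd1 n) x) := hderiv (1, 0)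
  have h22 : pd2 (pd2 n) x = σ • (pd2 n x ⨯₃ pd1 n x + n x ⨯₃ pd1 (pd2 n) x) := by
    have hsym : pd2 (pd1 n) x = pd1 (pd2 n) x := hn.fderiv_fderiv_apply_comm _ _
    rw [← hsym]
    exact hderiv (0, 1)
  calc pd1 (pd1 n) x + pd2 (pd2 n) x
      = pd1 (pd1 n) x + (σ * σ) • ((n x ⨯₃ pd1 n x) ⨯₃ pd1 n x
          + n x ⨯₃ (n x ⨯₃ pd1 (pd1 n) x)) := by
        rw [h22, h12, hconf.self_of_nhds]
        simp only [cross_self, zero_add, map_smul, LinearMap.smul_apply, smul_add, smul_smul]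
    _ = -(2 * (pd1 n x ⬝ᵥ pd1 n x)) • n x := by
        rw [hσ, one_smul, cross_cross_eq_smul_sub_smul, cross_cross_eq_smul_sub_smul', hnu, hnw,
          hunit.self_of_nhds]
        module

end Qtensor

/-- If the unit-vector field `n` is conformal, then the associated `Q`-tensor field
`Q = √(3/2)(n ⊗ n - (1/3)I)` satisfies the `S⁴`-valued harmonic map equation
`ΔQ = -(|∂₁Q|² + |∂₂Q|²) Q`. -/
theorem conformal_implies_Qtensor_harmonic
    (Ω : Set (ℝ × ℝ)) (hΩ : IsOpen Ω)
    (n : ℝ × ℝ → (Fin 3 → ℝ)) (hC2 : ContDiffOn ℝ 2 n Ω)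
    (hunit : ∀ x ∈ Ω, n x ⬝ᵥ n x = 1)
    (σ : ℝ) (hσ : σ = 1 ∨ σ = -1)
    (hconf : ∀ x ∈ Ω, pd2 n x = σ • (n x ⨯₃ pd1 n x)) :
    ∀ x ∈ Ω,
      pdM1 (pdM1 (Qtensor n)) x + pdM2 (pdM2 (Qtensor n)) x
        = -(frobSq (pdM1 (Qtensor n) x) + frobSq (pdM2 (Qtensor n) x)) • Qtensor n x := by
  intro x hx
  have hΩx : Ω ∈ 𝓝 x := hΩ.mem_nhds hx
  have hn : ContDiffAt ℝ 2 n x := hC2.contDiffAt hΩx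
  have hσ2 : σ * σ = 1 := by rcases hσ with rfl | rfl <;> norm_num
  have hunit' : ∀ᶠ y in 𝓝 x, n y ⬝ᵥ n y = 1 := eventually_of_mem hΩx hunit
  have hd := hn.differentiableAt two_ne_zero
  have hnu : n x ⬝ᵥ pd1 n x = 0 := dotProduct_fderiv_eq_zero_of_unit hunit' hd _
  have hnv : n x ⬝ᵥ pd2 n x = 0 := dotProduct_fderiv_eq_zero_of_unit hunit' hd _
  have hv : pd2 n x = σ • (n x ⨯₃ pd1 n x) := hconf x hx
  have hfrob1 : frobSq (pdM1 (Qtensor n) x) = 3 * (pd1 n x ⬝ᵥ pd1 n x) :=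
    frobSq_matrixDirDeriv_Qtensor hd (hunit x hx) hnu
  have hfrob2 : frobSq (pdM2 (Qtensor n) x) = 3 * (pd1 n x ⬝ᵥ pd1 n x) := by
    rw [← smul_cross_dotProduct_self hσ2 (hunit x hx) hnu, ← hv]
    exact frobSq_matrixDirDeriv_Qtensor hd (hunit x hx) hnv
  rw [laplacian_Qtensor hn, laplacian_eq_of_conformal hn hunit' hσ2 (eventually_of_mem hΩx hconf),
    hv, vecMulVec_add_vecMulVec_smul_cross hσ2 (hunit x hx) hnu, hfrob1, hfrob2, Qtensor,
    smul_vecMulVec, vecMulVec_smul]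
  module
end

section
/- Let Ω ⊆ ℝ² be an open set and let n : Ω → ℝ³ be differentiable with |n(x)| = 1 and n(x)·e₃ > −1 for all x ∈ Ω. Define w : Ω → ℂ by w = (n₁ + i n₂)/(1 + n₃), where nⱼ = n·eⱼ. Then for each x ∈ Ω the identity ∂₂n(x) = n(x) × ∂₁n(x) holds if and only if w satisfies the Cauchy–Riemann equations at x, namely Re(∂₁w(x)) = Im(∂₂w(x)) and Re(∂₂w(x)) = −Im(∂₁w(x)). -/
open Matrix

noncomputable def pdC1 (f : ℝ × ℝ → ℂ) (x : ℝ × ℝ) : ℂ := fderiv ℝ f x (1, 0)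

noncomputable def pdC2 (f : ℝ × ℝ → ℂ) (x : ℝ × ℝ) : ℂ := fderiv ℝ f x (0, 1)

/-- Stereographic projection (from the south pole `-e₃`) of a unit-vector field:
`w = (n₁ + i n₂) / (1 + n₃)`. -/
noncomputable def wproj (n : ℝ × ℝ → (Fin 3 → ℝ)) (x : ℝ × ℝ) : ℂ :=
  ((n x 0 : ℂ) + (n x 1 : ℂ) * Complex.I) / (1 + (n x 2 : ℂ))

/-!
Stereographic projection is conformal and orientation preserving. At `p ∈ S²` with `p₃ ≠ -1` its
differential is `u ↦ σ_p(u) / (1 + p₃)²`, where `σ_p = stereoDerivNum p`,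
`σ_p(u) = (1 + p₃)(u₁ + i u₂) - (p₁ + i p₂) u₃`. On the tangent plane `p^⊥` the map `σ_p` is
injective and turns the rotation `u ↦ p × u` into multiplication by `i`. Since `∂₁n` and `∂₂n`
are tangent to the sphere, `∂₂n = n × ∂₁n` is therefore equivalent to `∂₂w = i ∂₁w`, which is
the Cauchy–Riemann system.
-/

open Complex Filter Topology

theorem Complex.eq_I_mul_iff {z w : ℂ} : w = I * z ↔ z.re = w.im ∧ w.re = -z.im := by
  simp only [Complex.ext_iff, mul_re, mul_im, I_re, I_im]
  constructor <;> rintro ⟨h₁, h₂⟩ <;> constructor <;> linarith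

theorem dotProduct_fderiv_eq_zero_of_eventually_dotProduct_self_eq
    {E ι : Type*} [NormedAddCommGroup E] [NormedSpace ℝ E] [Fintype ι]
    {n : E → ι → ℝ} {x : E} {c : ℝ} (hn : DifferentiableAt ℝ n x)
    (hconst : ∀ᶠ y in 𝓝 x, n y ⬝ᵥ n y = c) (h : E) :
    n x ⬝ᵥ fderiv ℝ n x h = 0 := by
  have hcomp (i : ι) := hasFDerivAt_pi'.1 hn.hasFDerivAt i
  have hsq : HasFDerivAt (fun y => n y ⬝ᵥ n y)
      (∑ i, (n x i • (ContinuousLinearMap.proj i).comp (fderiv ℝ n x)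
        + n x i • (ContinuousLinearMap.proj i).comp (fderiv ℝ n x))) x :=
    HasFDerivAt.fun_sum fun i _ => (hcomp i).mul (hcomp i)
  have hzero := hsq.unique ((hasFDerivAt_const c x).congr_of_eventuallyEq hconst)
  simpa [dotProduct, ← two_mul, ← Finset.mul_sum] using congrArg (· h) hzero

noncomputable def stereo (p : Fin 3 → ℝ) : ℂ :=
  ((p 0 : ℂ) + (p 1 : ℂ) * I) / (1 + (p 2 : ℂ))

def stereoDerivNum (p u : Fin 3 → ℝ) : ℂ :=
  (1 + p 2) * (u 0 + u 1 * I) - (p 0 + p 1 * I) * u 2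

@[simp]
theorem stereoDerivNum_re (p u : Fin 3 → ℝ) :
    (stereoDerivNum p u).re = (1 + p 2) * u 0 - p 0 * u 2 := by
  simp [stereoDerivNum]

@[simp]
theorem stereoDerivNum_im (p u : Fin 3 → ℝ) :
    (stereoDerivNum p u).im = (1 + p 2) * u 1 - p 1 * u 2 := by
  simp [stereoDerivNum]

theorem stereoDerivNum_cross {p u : Fin 3 → ℝ} (hp : p ⬝ᵥ p = 1) (hu : p ⬝ᵥ u = 0) :
    stereoDerivNum p (p ⨯₃ u) = I * stereoDerivNum p u := by
  simp only [dotProduct, Fin.sum_univ_three] at hp hu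
  apply Complex.ext <;>
    simp only [stereoDerivNum_re, stereoDerivNum_im, mul_re, mul_im, I_re, I_im, cross_apply,
      cons_val_zero, cons_val_one, cons_val]
  · linear_combination p 1 * hu - u 1 * hp
  · linear_combination u 0 * hp - p 0 * hu

theorem eq_of_stereoDerivNum_eq {p u v : Fin 3 → ℝ} (hp : p ⬝ᵥ p = 1) (hc : 1 + p 2 ≠ 0)
    (hu : p ⬝ᵥ u = 0) (hv : p ⬝ᵥ v = 0) (h : stereoDerivNum p u = stereoDerivNum p v) : u = v := by
  simp only [dotProduct, Fin.sum_univ_three] at hp hu hv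
  obtain ⟨h₀, h₁⟩ : (1 + p 2) * (u 0 - v 0) = p 0 * (u 2 - v 2) ∧
      (1 + p 2) * (u 1 - v 1) = p 1 * (u 2 - v 2) := by
    have hre := congrArg re h
    have him := congrArg im h
    rw [stereoDerivNum_re, stereoDerivNum_re] at hre
    rw [stereoDerivNum_im, stereoDerivNum_im] at him
    constructor <;> linarith
  have h₂ : u 2 = v 2 := by
    -- for `p = (a, b, c)`: `(1 + c) p ⬝ᵥ (u - v) = (a² + b² + c (1 + c)) (u₃ - v₃) = (1 + c) (u₃ - v₃)`
    have : (1 + p 2) * (u 2 - v 2) = 0 := by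
      linear_combination (1 + p 2) * (hu - hv) - p 0 * h₀ - p 1 * h₁ - (u 2 - v 2) * hp
    linarith [(mul_eq_zero.1 this).resolve_left hc]
  rw [h₂, sub_self, mul_zero, mul_eq_zero, sub_eq_zero] at h₀ h₁
  ext i
  fin_cases i
  exacts [h₀.resolve_left hc, h₁.resolve_left hc, h₂]

theorem eq_cross_iff_stereoDerivNum_eq {p u v : Fin 3 → ℝ} (hp : p ⬝ᵥ p = 1) (hc : 1 + p 2 ≠ 0)
    (hu : p ⬝ᵥ u = 0) (hv : p ⬝ᵥ v = 0) :
    v = p ⨯₃ u ↔ stereoDerivNum p v = I * stereoDerivNum p u := by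
  rw [← stereoDerivNum_cross hp hu]
  exact ⟨congrArg _, eq_of_stereoDerivNum_eq hp hc hv (dot_self_cross p u)⟩

theorem differentiableAt_stereo {p : Fin 3 → ℝ} (hc : 1 + p 2 ≠ 0) :
    DifferentiableAt ℝ stereo p := by
  have hc' : (1 : ℂ) + (p 2 : ℂ) ≠ 0 := by exact_mod_cast hc
  unfold stereo
  simp only [div_eq_mul_inv]
  fun_prop (disch := exact hc')

theorem fderiv_stereo_apply {p : Fin 3 → ℝ} (hc : 1 + p 2 ≠ 0) (u : Fin 3 → ℝ) :
    fderiv ℝ stereo p u = stereoDerivNum p u / (1 + (p 2 : ℂ)) ^ 2 := by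
  have hc' : (1 : ℂ) + (p 2 : ℂ) ≠ 0 := by exact_mod_cast hc
  have hcoord (i : Fin 3) : HasDerivAt (fun t : ℝ => (((p + t • u) i : ℝ) : ℂ)) (u i) 0 := by
    simpa using (((hasDerivAt_id (0 : ℝ)).mul_const (u i)).const_add (p i)).ofReal_comp
  have hline : HasLineDerivAt ℝ stereo (stereoDerivNum p u / (1 + (p 2 : ℂ)) ^ 2) p u :=
    (((hcoord 0).add ((hcoord 1).mul_const I)).fun_div ((hcoord 2).const_add 1)
      (by simpa using hc')).congr_deriv (by simp only [Pi.add_apply, zero_smul, Pi.zero_apply, add_zero, stereoDerivNum]; ring)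
  rw [← (differentiableAt_stereo hc).lineDeriv_eq_fderiv, hline.lineDeriv]

theorem fderiv_wproj_apply {n : ℝ × ℝ → Fin 3 → ℝ} {x : ℝ × ℝ} (hn : DifferentiableAt ℝ n x)
    (hc : 1 + n x 2 ≠ 0) (h : ℝ × ℝ) :
    fderiv ℝ (wproj n) x h = stereoDerivNum (n x) (fderiv ℝ n x h) / (1 + (n x 2 : ℂ)) ^ 2 := by
  change fderiv ℝ (stereo ∘ n) x h = _
  rw [fderiv_comp x (differentiableAt_stereo hc) hn, ContinuousLinearMap.comp_apply,
    fderiv_stereo_apply hc]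

/-- For a differentiable unit-vector field `n` avoiding the south pole, the
conformality relation `∂₂n = n × ∂₁n` holds at a point if and only if its
stereographic projection `w` satisfies the Cauchy–Riemann equations there. -/
theorem conformal_iff_CauchyRiemann
    (Ω : Set (ℝ × ℝ)) (hΩ : IsOpen Ω)
    (n : ℝ × ℝ → (Fin 3 → ℝ)) (hdiff : DifferentiableOn ℝ n Ω)
    (hunit : ∀ x ∈ Ω, n x ⬝ᵥ n x = 1)
    (hpole : ∀ x ∈ Ω, -1 < n x 2) :
    ∀ x ∈ Ω,
      (pd2 n x = n x ⨯₃ pd1 n x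
        ↔ (pdC1 (wproj n) x).re = (pdC2 (wproj n) x).im
          ∧ (pdC2 (wproj n) x).re = -(pdC1 (wproj n) x).im) := by
  intro x hx
  have hnx : DifferentiableAt ℝ n x := (hdiff x hx).differentiableAt (hΩ.mem_nhds hx)
  have hc : 1 + n x 2 ≠ 0 := by linarith [hpole x hx]
  have hc' : (1 + (n x 2 : ℂ)) ^ 2 ≠ 0 := pow_ne_zero 2 (by exact_mod_cast hc)
  have htangent (h : ℝ × ℝ) : n x ⬝ᵥ fderiv ℝ n x h = 0 :=
    dotProduct_fderiv_eq_zero_of_eventually_dotProduct_self_eq hnx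
      (eventually_of_mem (hΩ.mem_nhds hx) hunit) h
  rw [← Complex.eq_I_mul_iff, pdC1, pdC2, fderiv_wproj_apply hnx hc, fderiv_wproj_apply hnx hc,
    mul_div_assoc', div_left_inj' hc']
  exact eq_cross_iff_stereoDerivNum_eq (hunit x hx) hc (htangent _) (htangent _)
end

section
/- Let a², b², c² > 0, s₊ = (b² + √(b⁴ + 24a²c²))/(4c²), μ = b²s₊, ν = (1/3)b²s₊ + 2a². Let (n, p, q) be an orthonormal basis of ℝ³, let u₁ ∈ ℝ³ with u₁·n = 0, and set u₂ = n × u₁ (the conformal relation). Set A = u₁⊗u₁ + u₂⊗u₂ and define b₁ = −√2 s₊ A:(p⊗p − q⊗q), b₂ = −√2 s₊ A:(p⊗q + q⊗p), b₃ = √6 s₊ (|u₁|² + |u₂|²). Then b₁ = 0 and b₂ = 0 (i.e. A:(p⊗p − q⊗q) = 0 and A:(p⊗q + q⊗p) = 0), and (b₁² + b₂²)/(2μ) + b₃²/(2ν) = (3/ν) s₊² (|u₁|² + |u₂|²)² = (12/ν) s₊² |u₁|⁴. -/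
open Matrix

/-- Frobenius inner product of 3×3 real matrices: `A : B = tr(Aᵀ B)`. -/
noncomputable def minner (A B : Matrix (Fin 3) (Fin 3) ℝ) : ℝ := (Aᵀ * B).trace

/-!
For a unit vector `n` and `u ⊥ n`, the vectors `u` and `n × u` are orthogonal of the same length
and span the plane `n^⊥`, so `u ⊗ u + (n × u) ⊗ (n × u) = |u|² (I - n ⊗ n)` is a multiple of the
orthogonal projection onto that plane. Pairing it with `p ⊗ p - q ⊗ q` and `p ⊗ q + q ⊗ p` for `p, q`
orthonormal in `n^⊥` gives `|u|² (1 - 1)` and `2 |u|² p·q`, both zero. The energy identity is then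
`b₃² / (2ν) = 6 s₊² (2|u₁|²)² / (2ν)`.
-/

section CrossProduct

variable {R : Type*} [CommRing R]

theorem vecMulVec_cross_self (n u : Fin 3 → R) :
    vecMulVec (n ⨯₃ u) (n ⨯₃ u)
      = ((n ⬝ᵥ n) * (u ⬝ᵥ u) - (n ⬝ᵥ u) ^ 2) • (1 : Matrix (Fin 3) (Fin 3) R)
        - (u ⬝ᵥ u) • vecMulVec n n + (n ⬝ᵥ u) • (vecMulVec n u + vecMulVec u n)
        - (n ⬝ᵥ n) • vecMulVec u u := by
  ext i j
  fin_cases i <;> fin_cases j <;>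
    simp [vecMulVec, cross_apply, dotProduct, Fin.sum_univ_three, one_apply] <;> ring

theorem vecMulVec_add_vecMulVec_cross_self {n u : Fin 3 → R} (hn : n ⬝ᵥ n = 1)
    (hu : u ⬝ᵥ n = 0) :
    vecMulVec u u + vecMulVec (n ⨯₃ u) (n ⨯₃ u) = (u ⬝ᵥ u) • (1 - vecMulVec n n) := by
  rw [vecMulVec_cross_self, hn, dotProduct_comm n u, hu]
  module

theorem cross_dot_cross_self {n u : Fin 3 → R} (hn : n ⬝ᵥ n = 1) (hu : u ⬝ᵥ n = 0) :
    n ⨯₃ u ⬝ᵥ n ⨯₃ u = u ⬝ᵥ u := by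
  rw [cross_dot_cross, hn, hu, dotProduct_comm n u, hu]
  ring

end CrossProduct

theorem minner_sub_right (M B C : Matrix (Fin 3) (Fin 3) ℝ) :
    minner M (B - C) = minner M B - minner M C := by
  simp only [minner, Matrix.mul_sub, trace_sub]

theorem minner_add_right (M B C : Matrix (Fin 3) (Fin 3) ℝ) :
    minner M (B + C) = minner M B + minner M C := by
  simp only [minner, Matrix.mul_add, trace_add]

theorem minner_vecMulVec (M : Matrix (Fin 3) (Fin 3) ℝ) (v w : Fin 3 → ℝ) :
    minner M (vecMulVec v w) = v ⬝ᵥ (M *ᵥ w) := by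
  simp only [minner, trace, diag, mul_apply, transpose_apply, vecMulVec_apply, mulVec,
    dotProduct, Finset.mul_sum]
  rw [Finset.sum_comm]
  exact Finset.sum_congr rfl fun _ _ => Finset.sum_congr rfl fun _ _ => by ring

theorem minner_smul_one_sub_vecMulVec_self (c : ℝ) (n v w : Fin 3 → ℝ) :
    minner (c • (1 - vecMulVec n n)) (vecMulVec v w) = c * (v ⬝ᵥ w - (n ⬝ᵥ v) * (n ⬝ᵥ w)) := by
  rw [minner_vecMulVec, smul_mulVec, sub_mulVec, one_mulVec, vecMulVec_mulVec]
  simp only [op_smul_eq_smul, dotProduct_smul, dotProduct_sub, smul_eq_mul, dotProduct_comm v n]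
  ring

theorem first_order_correction_conformal_general
    (splus μ ν : ℝ)
    (n p q : Fin 3 → ℝ)
    (hnn : n ⬝ᵥ n = 1) (hpp : p ⬝ᵥ p = 1) (hqq : q ⬝ᵥ q = 1)
    (hnp : n ⬝ᵥ p = 0) (hnq : n ⬝ᵥ q = 0) (hpq : p ⬝ᵥ q = 0)
    (u1 u2 : Fin 3 → ℝ) (hu1 : u1 ⬝ᵥ n = 0) (hu2 : u2 = n ⨯₃ u1)
    (A : Matrix (Fin 3) (Fin 3) ℝ) (hA : A = vecMulVec u1 u1 + vecMulVec u2 u2)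
    (bb1 bb2 bb3 : ℝ)
    (hbb1 : bb1 = -(Real.sqrt 2 * splus) * minner A (vecMulVec p p - vecMulVec q q))
    (hbb2 : bb2 = -(Real.sqrt 2 * splus) * minner A (vecMulVec p q + vecMulVec q p))
    (hbb3 : bb3 = Real.sqrt 6 * splus * (u1 ⬝ᵥ u1 + u2 ⬝ᵥ u2)) :
    bb1 = 0 ∧ bb2 = 0
    ∧ (bb1 ^ 2 + bb2 ^ 2) / (2 * μ) + bb3 ^ 2 / (2 * ν)
        = (3 / ν) * splus ^ 2 * (u1 ⬝ᵥ u1 + u2 ⬝ᵥ u2) ^ 2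
    ∧ (3 / ν) * splus ^ 2 * (u1 ⬝ᵥ u1 + u2 ⬝ᵥ u2) ^ 2
        = (12 / ν) * splus ^ 2 * (u1 ⬝ᵥ u1) ^ 2 := by
  subst hu2
  have hA' : A = (u1 ⬝ᵥ u1) • (1 - vecMulVec n n) := by
    rw [hA, vecMulVec_add_vecMulVec_cross_self hnn hu1]
  have hbiax1 : minner A (vecMulVec p p - vecMulVec q q) = 0 := by
    rw [minner_sub_right, hA', minner_smul_one_sub_vecMulVec_self,
      minner_smul_one_sub_vecMulVec_self, hpp, hqq, hnp, hnq]
    ring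
  have hbiax2 : minner A (vecMulVec p q + vecMulVec q p) = 0 := by
    rw [minner_add_right, hA', minner_smul_one_sub_vecMulVec_self,
      minner_smul_one_sub_vecMulVec_self, dotProduct_comm q p, hpq, hnp, hnq]
    ring
  have hb1 : bb1 = 0 := by rw [hbb1, hbiax1, mul_zero]
  have hb2 : bb2 = 0 := by rw [hbb2, hbiax2, mul_zero]
  rw [cross_dot_cross_self hnn hu1] at hbb3 ⊢
  refine ⟨hb1, hb2, ?_, by ring⟩
  rw [hb1, hb2, hbb3, mul_pow, mul_pow, Real.sq_sqrt (by norm_num)]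
  ring

/-- In the conformal case `u₂ = n × u₁`, the biaxial components `b₁, b₂` of the
first-order correction vanish, and the correction energy density reduces to
`(3/ν) s₊² (|u₁|² + |u₂|²)² = (12/ν) s₊² |u₁|⁴`. -/
theorem first_order_correction_conformal
    (a2 b2 c2 : ℝ) (ha : 0 < a2) (hb : 0 < b2) (hc : 0 < c2)
    (splus μ ν : ℝ)
    (hsplus : splus = (b2 + Real.sqrt (b2 ^ 2 + 24 * a2 * c2)) / (4 * c2))
    (hμ : μ = b2 * splus) (hν : ν = (1 / 3) * b2 * splus + 2 * a2)
    (n p q : Fin 3 → ℝ)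
    (hnn : n ⬝ᵥ n = 1) (hpp : p ⬝ᵥ p = 1) (hqq : q ⬝ᵥ q = 1)
    (hnp : n ⬝ᵥ p = 0) (hnq : n ⬝ᵥ q = 0) (hpq : p ⬝ᵥ q = 0)
    (u1 u2 : Fin 3 → ℝ) (hu1 : u1 ⬝ᵥ n = 0) (hu2 : u2 = n ⨯₃ u1)
    (A : Matrix (Fin 3) (Fin 3) ℝ) (hA : A = vecMulVec u1 u1 + vecMulVec u2 u2)
    (bb1 bb2 bb3 : ℝ)
    (hbb1 : bb1 = -(Real.sqrt 2 * splus) * minner A (vecMulVec p p - vecMulVec q q))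
    (hbb2 : bb2 = -(Real.sqrt 2 * splus) * minner A (vecMulVec p q + vecMulVec q p))
    (hbb3 : bb3 = Real.sqrt 6 * splus * (u1 ⬝ᵥ u1 + u2 ⬝ᵥ u2)) :
    bb1 = 0 ∧ bb2 = 0
    ∧ (bb1 ^ 2 + bb2 ^ 2) / (2 * μ) + bb3 ^ 2 / (2 * ν)
        = (3 / ν) * splus ^ 2 * (u1 ⬝ᵥ u1 + u2 ⬝ᵥ u2) ^ 2
    ∧ (3 / ν) * splus ^ 2 * (u1 ⬝ᵥ u1 + u2 ⬝ᵥ u2) ^ 2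
        = (12 / ν) * splus ^ 2 * (u1 ⬝ᵥ u1) ^ 2 :=
  first_order_correction_conformal_general splus μ ν n p q hnn hpp hqq hnp hnq hpq u1 u2 hu1 hu2 A
    hA bb1 bb2 bb3 hbb1 hbb2 hbb3
end
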